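/- arXiv:1904.03213 — 3 statements merged into one kernel-verified Lean document; each statement's English description precedes it below -/
import Mathlib

section
/- Let Φ be a completely positive map given by Φ(Y) = Σ_{i=1}^k A_i Y A_i* with A_i ∈ ℝ^{m×n}, and suppose the operator (A₁,…,A_k) is ε-nearly doubly balanced with size s = Σᵢ tr(A_i A_i*). Then the largest singular value of the natural matrix representation M = Σᵢ A_i ⊗ A_i satisfies σ₁(M) ≤ (1+ε)·s/√(mn). -/
open Matrix Kronecker

/-- The list of singular values of a real matrix, in non-increasing order. -/
noncomputable def svList {m n : Type*} [Fintype m] [Fintype n] [DecidableEq n]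
    (A : Matrix m n ℝ) : List ℝ :=
  ((Finset.univ.val.map fun i =>
      Real.sqrt ((show (Aᵀ * A).IsHermitian by
        simpa using Matrix.isHermitian_conjTranspose_mul_self A).eigenvalues i)).toList).insertionSort
    (· ≥ ·)

/-- `sv A k` is the `k`-th largest singular value of `A` (1-indexed). -/
noncomputable def sv {m n : Type*} [Fintype m] [Fintype n] [DecidableEq n]
    (A : Matrix m n ℝ) (k : ℕ) : ℝ :=
  (svList A).getD (k - 1) 0

/-! Write Φ(Y) = ∑ₗ Aₗ Y Aₗᵀ, so that M (vec Y) = vec Φ(Y). With α = (1+ε)s/m, β = (1+ε)s/n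
we have ∑ AₗAₗᵀ ⪯ αI, ∑ AₗᵀAₗ ⪯ βI and αβ = ((1+ε)s)²/(mn). It suffices to show
‖Φ(Y)‖_F² ≤ αβ‖Y‖_F², since then every eigenvalue of MᵀM is at most αβ. With Z = Φ(Y),
‖Z‖² = ∑ₗ ⟨AₗᵀZ, YAₗᵀ⟩, and Cauchy–Schwarz bounds this by the geometric mean of
∑ₗ ‖AₗᵀZ‖² = tr(Zᵀ(∑AₗAₗᵀ)Z) ≤ α‖Z‖² and ∑ₗ ‖YAₗᵀ‖² = tr(Y(∑AₗᵀAₗ)Yᵀ) ≤ β‖Y‖². -/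

namespace Matrix

lemma nonneg_of_posSemidef_smul_one_sub {n : Type*} [DecidableEq n] [Nonempty n]
    {B : Matrix n n ℝ} {c : ℝ} (hB : B.PosSemidef) (h : (c • 1 - B).PosSemidef) : 0 ≤ c := by
  simpa using (h.add hB).diag_nonneg (i := Classical.arbitrary n)

variable {ι m n : Type*} [Fintype ι] [Fintype n]

def krausMap (A : ι → Matrix m n ℝ) (Y : Matrix n n ℝ) : Matrix m m ℝ :=
  ∑ l, A l * Y * (A l)ᵀ

lemma sum_kronecker_mulVec_vec (A : ι → Matrix m n ℝ) (Y : Matrix n n ℝ) :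
    (∑ l, A l ⊗ₖ A l) *ᵥ vec Y = vec (krausMap A Y) := by
  simp only [sum_mulVec, kronecker_mulVec_vec, krausMap, vec_sum]

lemma IsHermitian.eigenvalues_le_of_dotProduct_mulVec_le [DecidableEq n] {H : Matrix n n ℝ}
    (hH : H.IsHermitian) {c : ℝ} (h : ∀ x, x ⬝ᵥ H *ᵥ x ≤ c * (x ⬝ᵥ x)) (i : n) :
    hH.eigenvalues i ≤ c := by
  set u := hH.eigenvectorBasis i
  have hu : ‖u‖ = 1 := hH.eigenvectorBasis.orthonormal.1 i
  have hunit : ⇑u ⬝ᵥ ⇑u = 1 := by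
    simpa [real_inner_self_eq_norm_sq, hu] using
      (EuclideanSpace.inner_eq_star_dotProduct u u).symm
  simpa [hH.eigenvalues_eq, hunit] using h u

variable [Fintype m]

lemma trace_transpose_mul_self_nonneg (X : Matrix m n ℝ) : 0 ≤ trace (Xᵀ * X) := by
  rw [← vec_dotProduct_vec]
  exact Finset.sum_nonneg fun _ _ => mul_self_nonneg _

lemma trace_transpose_mul_mul_le_of_posSemidef_smul_one_sub [DecidableEq m] {B : Matrix m m ℝ}
    {c : ℝ} (h : (c • 1 - B).PosSemidef) (X : Matrix m n ℝ) :
    trace (Xᵀ * B * X) ≤ c * trace (Xᵀ * X) := by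
  have := (h.conjTranspose_mul_mul_same X).trace_nonneg
  simp only [conjTranspose_eq_transpose_of_trivial, Matrix.mul_sub, Matrix.sub_mul, trace_sub,
    Matrix.mul_smul, Matrix.smul_mul, Matrix.mul_one, trace_smul, smul_eq_mul] at this
  linarith

lemma sq_sum_trace_transpose_mul_le (X W : ι → Matrix m n ℝ) :
    (∑ l, trace ((X l)ᵀ * W l)) ^ 2 ≤
      (∑ l, trace ((X l)ᵀ * X l)) * ∑ l, trace ((W l)ᵀ * W l) := by
  simp only [← vec_dotProduct_vec, dotProduct, ← Fintype.sum_prod_type', ← sq]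
  exact Finset.sum_mul_sq_le_sq_mul_sq _ _ _

lemma trace_transpose_mul_self_krausMap_le [DecidableEq m] [DecidableEq n]
    {A : ι → Matrix m n ℝ} {α β : ℝ} (hα : 0 ≤ α)
    (hB : (α • 1 - ∑ l, A l * (A l)ᵀ).PosSemidef) (hC : (β • 1 - ∑ l, (A l)ᵀ * A l).PosSemidef)
    (Y : Matrix n n ℝ) :
    trace ((krausMap A Y)ᵀ * krausMap A Y) ≤ α * β * trace (Yᵀ * Y) := by
  set Z := krausMap A Y
  have hcross : trace (Zᵀ * Z) = ∑ l, trace (((A l)ᵀ * Z)ᵀ * (Y * (A l)ᵀ)) := by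
    change trace (Zᵀ * ∑ l, A l * Y * (A l)ᵀ) = _
    simp only [Matrix.mul_sum, trace_sum, transpose_mul, transpose_transpose, Matrix.mul_assoc]
  have hZ : ∑ l, trace (((A l)ᵀ * Z)ᵀ * ((A l)ᵀ * Z)) ≤ α * trace (Zᵀ * Z) := by
    simpa only [Matrix.mul_sum, Matrix.sum_mul, trace_sum, transpose_mul, transpose_transpose,
      Matrix.mul_assoc] using trace_transpose_mul_mul_le_of_posSemidef_smul_one_sub hB Z
  have hY : ∑ l, trace ((Y * (A l)ᵀ)ᵀ * (Y * (A l)ᵀ)) ≤ β * trace (Yᵀ * Y) := by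
    have := trace_transpose_mul_mul_le_of_posSemidef_smul_one_sub hC Yᵀ
    simp only [Matrix.mul_sum, Matrix.sum_mul, trace_sum, transpose_transpose] at this
    calc ∑ l, trace ((Y * (A l)ᵀ)ᵀ * (Y * (A l)ᵀ))
        = ∑ l, trace (Y * ((A l)ᵀ * A l) * Yᵀ) := by
          refine Finset.sum_congr rfl fun l _ => ?_
          rw [trace_mul_comm]
          simp only [transpose_mul, transpose_transpose, Matrix.mul_assoc]
      _ ≤ β * trace (Y * Yᵀ) := this
      _ = β * trace (Yᵀ * Y) := by rw [trace_mul_comm]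
  have hCS := sq_sum_trace_transpose_mul_le (fun l => (A l)ᵀ * Z) (fun l => Y * (A l)ᵀ)
  rw [← hcross] at hCS
  have hT := trace_transpose_mul_self_nonneg Z
  have hV : 0 ≤ β * trace (Yᵀ * Y) :=
    (Finset.sum_nonneg fun l _ => trace_transpose_mul_self_nonneg _).trans hY
  have hsq : trace (Zᵀ * Z) ^ 2 ≤ (α * trace (Zᵀ * Z)) * (β * trace (Yᵀ * Y)) :=
    hCS.trans (mul_le_mul hZ hY (Finset.sum_nonneg fun l _ => trace_transpose_mul_self_nonneg _)
      (mul_nonneg hα hT))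
  nlinarith [mul_nonneg hα hV]

end Matrix

lemma sv_le_of_dotProduct_mulVec_le {m n : Type*} [Fintype m] [Fintype n] [DecidableEq n]
    {M : Matrix m n ℝ} {c : ℝ} (hc : 0 ≤ c) (h : ∀ v, M *ᵥ v ⬝ᵥ M *ᵥ v ≤ c ^ 2 * (v ⬝ᵥ v))
    (j : ℕ) : sv M j ≤ c := by
  have hMM : (Mᵀ * M).IsHermitian := by
    simpa using isHermitian_conjTranspose_mul_self M
  have heig : ∀ i, hMM.eigenvalues i ≤ c ^ 2 :=
    hMM.eigenvalues_le_of_dotProduct_mulVec_le fun v => by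
      rw [← mulVec_mulVec, dotProduct_mulVec, vecMul_transpose]
      exact h v
  have hmem : ∀ x ∈ svList M, x ≤ c := by
    intro x hx
    simp only [svList, List.mem_insertionSort, Multiset.mem_toList, Multiset.mem_map] at hx
    obtain ⟨i, -, rfl⟩ := hx
    exact (Real.sqrt_le_sqrt (heig i)).trans_eq (Real.sqrt_sq hc)
  rw [sv, List.getD_eq_getElem?_getD]
  cases hx : (svList M)[j - 1]? with
  | none => exact hc
  | some x => exact hmem x (List.mem_of_getElem? hx)

theorem stmt10_general {m n k : ℕ} (hm : 0 < m)
    (A : Fin k → Matrix (Fin m) (Fin n) ℝ) (ε : ℝ)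
    (s : ℝ)
    (hleft2 : (((1 + ε) * (s / m)) • (1 : Matrix (Fin m) (Fin m) ℝ) - ∑ i, A i * (A i)ᵀ).PosSemidef)
    (hright2 : (((1 + ε) * (s / n)) • (1 : Matrix (Fin n) (Fin n) ℝ) - ∑ i, (A i)ᵀ * A i).PosSemidef) :
    sv (∑ i, A i ⊗ₖ A i) 1 ≤ (1 + ε) * s / Real.sqrt (m * n) := by
  have : Nonempty (Fin m) := Fin.pos_iff_nonempty.mp hm
  have hα : 0 ≤ (1 + ε) * (s / m) := nonneg_of_posSemidef_smul_one_sub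
    (posSemidef_sum _ fun l _ => by
      simpa [conjTranspose_eq_transpose_of_trivial] using posSemidef_self_mul_conjTranspose (A l))
    hleft2
  have hc : 0 ≤ (1 + ε) * s / Real.sqrt (m * n) := by
    have hm' : (m : ℝ) ≠ 0 := Nat.cast_ne_zero.mpr hm.ne'
    have hαm : (1 + ε) * (s / m) * m = (1 + ε) * s := by field_simp
    exact div_nonneg (hαm ▸ mul_nonneg hα m.cast_nonneg) (Real.sqrt_nonneg _)
  have hc2 : ((1 + ε) * s / Real.sqrt (m * n)) ^ 2 = (1 + ε) * (s / m) * ((1 + ε) * (s / n)) := by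
    rw [div_pow, Real.sq_sqrt (by positivity)]
    ring
  refine sv_le_of_dotProduct_mulVec_le hc (fun v => ?_) 1
  obtain ⟨Y, rfl⟩ := vec_bijective.surjective v
  rw [sum_kronecker_mulVec_vec, vec_dotProduct_vec, vec_dotProduct_vec, hc2]
  exact trace_transpose_mul_self_krausMap_le hα hleft2 hright2 Y

/-- for an ε-nearly doubly balanced operator `(A₁, …, A_k)` of size `s`,
the natural matrix representation `M = Σᵢ Aᵢ ⊗ Aᵢ` satisfies
`σ₁(M) ≤ (1+ε) s / √(mn)`. -/
theorem stmt10 {m n k : ℕ} (hm : 0 < m) (hn : 0 < n)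
    (A : Fin k → Matrix (Fin m) (Fin n) ℝ) (ε : ℝ)
    (s : ℝ) (hs : s = ∑ i, Matrix.trace (A i * (A i)ᵀ))
    (hleft1 : (∑ i, A i * (A i)ᵀ - ((1 - ε) * (s / m)) • (1 : Matrix (Fin m) (Fin m) ℝ)).PosSemidef)
    (hleft2 : (((1 + ε) * (s / m)) • (1 : Matrix (Fin m) (Fin m) ℝ) - ∑ i, A i * (A i)ᵀ).PosSemidef)
    (hright1 : (∑ i, (A i)ᵀ * A i - ((1 - ε) * (s / n)) • (1 : Matrix (Fin n) (Fin n) ℝ)).PosSemidef)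
    (hright2 : (((1 + ε) * (s / n)) • (1 : Matrix (Fin n) (Fin n) ℝ) - ∑ i, (A i)ᵀ * A i).PosSemidef) :
    sv (∑ i, A i ⊗ₖ A i) 1 ≤ (1 + ε) * s / Real.sqrt (m * n) :=
  stmt10_general hm A ε s hleft2 hright2
end

section
/- Suppose an ε-nearly doubly balanced operator with size s⁰ evolves along the scaling flow so that at time t its maps satisfy ((2s^(t) − (1+ε)s⁰)/m)·I_m ⪯ Φ^(t)(I_n) ⪯ ((1+ε)s⁰/m)·I_m and the analogous bounds for (Φ^(t))*(I_m) with n in place of m. Then the quadratic terms satisfy ⟨(E^(t))², Φ^(t)(I_n)⟩ + ⟨(F^(t))², (Φ^(t))*(I_m)⟩ ≥ (2s^(t) − (1+ε)s⁰)·Δ^(t), where E^(t) = s^(t)I_m − mΦ^(t)(I_n), F^(t) = s^(t)I_n − n(Φ^(t))*(I_m), and Δ^(t) = (1/m)‖E^(t)‖_F² + (1/n)‖F^(t)‖_F². -/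
open Matrix

/-- Squared Frobenius norm of a real matrix. -/
def frobSq {m n : Type*} [Fintype m] [Fintype n] (A : Matrix m n ℝ) : ℝ :=
  ∑ i, ∑ j, (A i j) ^ 2

lemma myPsdTraceNonneg {n : ℕ} {X : Matrix (Fin n) (Fin n) ℝ} (hX : X.PosSemidef) :
    0 ≤ X.trace := by
  rw [Matrix.trace]
  apply Finset.sum_nonneg
  intro i _
  have := hX.2 (Finsupp.single i 1)
  simpa [dotProduct, Matrix.mulVec, Pi.single_apply] using this

lemma myTraceMulNonneg {n : ℕ} {X Y : Matrix (Fin n) (Fin n) ℝ}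
    (hX : X.PosSemidef) (hY : Y.PosSemidef) : 0 ≤ (X * Y).trace := by
  obtain ⟨B, rfl⟩ : ∃ B : Matrix (Fin n) (Fin n) ℝ, X = Bᴴ * B := by
    open scoped MatrixOrder in exact CStarAlgebra.nonneg_iff_eq_star_mul_self.mp hX.nonneg
  rw [Matrix.mul_assoc, Matrix.trace_mul_comm]
  exact myPsdTraceNonneg (hY.mul_mul_conjTranspose_same B)

lemma mySqPsd {n : ℕ} {E : Matrix (Fin n) (Fin n) ℝ} (hE : Eᵀ = E) :
    (E ^ 2).PosSemidef := by
  have hH : Eᴴ = E := by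
    ext i j
    simp only [Matrix.conjTranspose_apply, star_trivial]
    rw [← Matrix.transpose_apply E i j, hE]
  have : E ^ 2 = Eᴴ * E := by rw [pow_two, hH]
  rw [this]
  exact Matrix.posSemidef_conjTranspose_mul_self E

lemma myTraceSqEqFrobSq {n : ℕ} {E : Matrix (Fin n) (Fin n) ℝ} (hE : Eᵀ = E) :
    (E ^ 2).trace = frobSq E := by
  rw [pow_two, Matrix.trace, frobSq]
  apply Finset.sum_congr rfl
  intro i _
  rw [Matrix.diag, Matrix.mul_apply]
  apply Finset.sum_congr rfl
  intro j _
  have : E j i = E i j := by rw [← Matrix.transpose_apply E i j, hE]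
  rw [this, sq]

lemma myKey {n : ℕ} (c : ℝ) {Φ E : Matrix (Fin n) (Fin n) ℝ}
    (hE : Eᵀ = E) (hlow : (Φ - c • (1 : Matrix (Fin n) (Fin n) ℝ)).PosSemidef) :
    (( E ^ 2)ᵀ * Φ).trace ≥ c * frobSq E := by
  have h0 : 0 ≤ ((E ^ 2) * (Φ - c • 1)).trace :=
    myTraceMulNonneg (mySqPsd hE) hlow
  have hT : (E ^ 2)ᵀ = E ^ 2 := by rw [Matrix.transpose_pow, hE]
  rw [Matrix.mul_sub, Matrix.trace_sub, Matrix.mul_smul, Matrix.trace_smul, Matrix.mul_one,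
    sub_nonneg, smul_eq_mul, myTraceSqEqFrobSq hE] at h0
  rw [hT]
  exact h0

/-- if `((2s − (1+ε)s⁰)/m) I_m ⪯ Φ(I_n) ⪯ ((1+ε)s⁰/m) I_m` and
`((2s − (1+ε)s⁰)/n) I_n ⪯ Φ*(I_m) ⪯ ((1+ε)s⁰/n) I_n`, then
`⟨E², Φ(I_n)⟩ + ⟨F², Φ*(I_m)⟩ ≥ (2s − (1+ε)s⁰) Δ`, where
`E = s I_m − m Φ(I_n)`, `F = s I_n − n Φ*(I_m)` and `Δ = (1/m)‖E‖_F² + (1/n)‖F‖_F²`. -/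
theorem stmt15 {m n k : ℕ} (hm : 0 < m) (hn : 0 < n)
    (A : Fin k → Matrix (Fin m) (Fin n) ℝ) (ε s0 : ℝ)
    (s : ℝ) (hs : s = ∑ i, frobSq (A i))
    (h1 : ((∑ i, A i * (A i)ᵀ) -
      ((2 * s - (1 + ε) * s0) / m) • (1 : Matrix (Fin m) (Fin m) ℝ)).PosSemidef)
    (h2 : (((1 + ε) * s0 / m) • (1 : Matrix (Fin m) (Fin m) ℝ) -
      ∑ i, A i * (A i)ᵀ).PosSemidef)
    (h3 : ((∑ i, (A i)ᵀ * A i) -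
      ((2 * s - (1 + ε) * s0) / n) • (1 : Matrix (Fin n) (Fin n) ℝ)).PosSemidef)
    (h4 : (((1 + ε) * s0 / n) • (1 : Matrix (Fin n) (Fin n) ℝ) -
      ∑ i, (A i)ᵀ * A i).PosSemidef)
    (E : Matrix (Fin m) (Fin m) ℝ)
    (hE : E = s • (1 : Matrix (Fin m) (Fin m) ℝ) - (m : ℝ) • ∑ i, A i * (A i)ᵀ)
    (F : Matrix (Fin n) (Fin n) ℝ)
    (hF : F = s • (1 : Matrix (Fin n) (Fin n) ℝ) - (n : ℝ) • ∑ i, (A i)ᵀ * A i) :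
    Matrix.trace ((E ^ 2)ᵀ * ∑ i, A i * (A i)ᵀ) +
        Matrix.trace ((F ^ 2)ᵀ * ∑ i, (A i)ᵀ * A i) ≥
      (2 * s - (1 + ε) * s0) * ((1 / m) * frobSq E + (1 / n) * frobSq F) := by
  have hEsym : Eᵀ = E := by
    rw [hE]
    simp [Matrix.transpose_sub, Matrix.transpose_smul, Matrix.transpose_sum,
      Matrix.transpose_mul]
  have hFsym : Fᵀ = F := by
    rw [hF]
    simp [Matrix.transpose_sub, Matrix.transpose_smul, Matrix.transpose_sum,
      Matrix.transpose_mul]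
  have k1 := myKey ((2 * s - (1 + ε) * s0) / m) hEsym h1
  have k2 := myKey ((2 * s - (1 + ε) * s0) / n) hFsym h3
  have hm' : (m : ℝ) ≠ 0 := Nat.cast_ne_zero.mpr hm.ne'
  have hn' : (n : ℝ) ≠ 0 := Nat.cast_ne_zero.mpr hn.ne'
  have : (2 * s - (1 + ε) * s0) * ((1 / m) * frobSq E + (1 / n) * frobSq F)
      = (2 * s - (1 + ε) * s0) / m * frobSq E + (2 * s - (1 + ε) * s0) / n * frobSq F := by
    field_simp
  rw [this]
  exact add_le_add k1 k2
end

section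
/- Let B ∈ ℝ^{m×n} be a non-negative ε-nearly doubly balanced matrix with ε ≤ 1/2, and let G_B be its weighted bipartite graph with conductance φ(G_B). Then the second largest singular value of B satisfies σ₂(B) ≤ (1 − φ(G_B)²/2 + 3ε)·s(B)/√(mn). -/
open Matrix Finset

/-- The edge weights of the weighted bipartite graph `G_B` associated to a matrix `B`:
one vertex per row and per column, the edge between row `i` and column `j` has
weight `B i j`. -/
def bipWeight {m n : ℕ} (B : Matrix (Fin m) (Fin n) ℝ) :
    (Fin m ⊕ Fin n) → (Fin m ⊕ Fin n) → ℝ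
  | Sum.inl i, Sum.inr j => B i j
  | Sum.inr j, Sum.inl i => B i j
  | _, _ => 0

/-- The volume of a vertex set in the weighted graph. -/
def bipVol {m n : ℕ} (B : Matrix (Fin m) (Fin n) ℝ) (S : Finset (Fin m ⊕ Fin n)) : ℝ :=
  ∑ v ∈ S, ∑ u : Fin m ⊕ Fin n, bipWeight B v u

/-- The total weight of edges crossing from `S` to its complement. -/
def bipCut {m n : ℕ} (B : Matrix (Fin m) (Fin n) ℝ) (S : Finset (Fin m ⊕ Fin n)) : ℝ :=
  ∑ v ∈ S, ∑ u ∈ Sᶜ, bipWeight B v u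

/-- The conductance `φ(G_B)` of the weighted bipartite graph of `B`. -/
noncomputable def bipConductance {m n : ℕ} (B : Matrix (Fin m) (Fin n) ℝ) : ℝ :=
  sInf {x : ℝ | ∃ S : Finset (Fin m ⊕ Fin n), S.Nonempty ∧
    bipVol B S ≤ bipVol B Finset.univ / 2 ∧ x = bipCut B S / bipVol B S}

/-!
Write `r`, `c` for the row and column sums of `B` and `C = D_r^{-1/2} B D_c^{-1/2}`, so that
`B = D_r^{1/2} C D_c^{1/2}`. By min–max, a diagonal rescaling multiplies `σ₂` by at most the
product of the largest scaling factors, which for an `ε`-nearly doubly balanced matrix gives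
`σ₂(B) ≤ (1 + ε) s / √(mn) · σ₂(C)`.

The normalized adjacency matrix of `G_B` is `[[0, C], [Cᵀ, 0]]`, whose second eigenvalue is
`σ₂(C)`. Combining two top right singular vectors of `C` with their images under `C` yields a
vector orthogonal to `√deg` with Rayleigh quotient at least `σ₂(C)`; the sweep-cut proof of
Cheeger's inequality (median shift, positive and negative parts, superlevel sets of the square,
Cauchy–Schwarz) then gives `φ(G_B)² ≤ 2 (1 - σ₂(C))`. Finally
`(1 + ε)(1 - φ²/2) ≤ 1 - φ²/2 + 3ε`.
-/

section SortedValues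

variable {κ : Type*} [Fintype κ] {g : κ → ℝ} {l : List ℝ}

lemma length_eq_card_of_coe_eq_map (hlg : (l : Multiset ℝ) = univ.val.map g) :
    l.length = Fintype.card κ := by
  simpa using congrArg Multiset.card hlg

lemma exists_eq_cons_of_coe_eq_map [DecidableEq κ] (hlg : (l : Multiset ℝ) = univ.val.map g)
    (hl : l ≠ []) :
    ∃ i₀ l', l = g i₀ :: l' ∧ (l' : Multiset ℝ) = (univ.erase i₀).val.map g := by
  obtain ⟨a, l', rfl⟩ := List.exists_cons_of_ne_nil hl
  have ha : a ∈ univ.val.map g := hlg ▸ Multiset.mem_cons_self a l'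
  obtain ⟨i₀, -, rfl⟩ := Multiset.mem_map.1 ha
  refine ⟨i₀, l', rfl, (Multiset.cons_inj_right (g i₀)).1 ?_⟩
  rw [← Multiset.map_cons, erase_val, Multiset.cons_erase (mem_univ_val i₀)]
  exact hlg

variable [DecidableEq κ] (hl : l.Pairwise (· ≥ ·)) (hlg : (l : Multiset ℝ) = univ.val.map g)
include hl hlg

lemma exists_forall_ne_le_getD_one [Nonempty κ] : ∃ i₀, ∀ i ≠ i₀, g i ≤ l.getD 1 0 := by
  obtain ⟨i₀, l', rfl, hl'⟩ := exists_eq_cons_of_coe_eq_map hlg (by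
    rintro rfl
    exact Fintype.card_ne_zero (length_eq_card_of_coe_eq_map hlg).symm)
  refine ⟨i₀, fun i hi => ?_⟩
  have hi' : g i ∈ l' := by
    rw [← Multiset.mem_coe, hl']
    exact Multiset.mem_map_of_mem g (mem_erase.2 ⟨hi, mem_univ i⟩)
  obtain ⟨b, l'', rfl⟩ := List.exists_cons_of_ne_nil (List.ne_nil_of_mem hi')
  rcases List.mem_cons.1 hi' with h | h
  · exact h.le
  · exact (List.pairwise_cons.1 (List.pairwise_cons.1 hl).2).1 _ h

lemma exists_ne_getD_one_le (hcard : 2 ≤ Fintype.card κ) :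
    ∃ i₁ i₂, i₁ ≠ i₂ ∧ l.getD 1 0 ≤ g i₁ ∧ l.getD 1 0 ≤ g i₂ := by
  have hlen := length_eq_card_of_coe_eq_map hlg
  obtain ⟨i₁, l', rfl, hl'⟩ := exists_eq_cons_of_coe_eq_map hlg (by
    rintro rfl; simp at hlen; omega)
  obtain ⟨b, l'', rfl⟩ := List.exists_cons_of_ne_nil (l := l') (by
    rintro rfl; simp at hlen; omega)
  have hb : b ∈ (univ.erase i₁).val.map g := hl' ▸ Multiset.mem_cons_self b l''
  obtain ⟨i₂, hi₂, rfl⟩ := Multiset.mem_map.1 hb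
  exact ⟨i₁, i₂, (ne_of_mem_erase hi₂).symm,
    (List.pairwise_cons.1 hl).1 _ List.mem_cons_self, le_rfl⟩

end SortedValues

namespace Matrix

variable {m n : Type*} [Fintype m]

lemma isHermitian_transpose_mul_self (A : Matrix m n ℝ) : (Aᵀ * A).IsHermitian := by
  simpa using isHermitian_conjTranspose_mul_self A

variable [Fintype n]

lemma mulVec_dotProduct_mulVec (A : Matrix m n ℝ) (x y : n → ℝ) :
    (A *ᵥ x) ⬝ᵥ (A *ᵥ y) = x ⬝ᵥ ((Aᵀ * A) *ᵥ y) := by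
  rw [← mulVec_mulVec, dotProduct_mulVec x, vecMul_transpose]

variable [DecidableEq n]

namespace IsHermitian

variable {M : Matrix n n ℝ} (hM : M.IsHermitian)
include hM

lemma eigenvectorBasis_dotProduct (k l : n) :
    ⇑(hM.eigenvectorBasis k) ⬝ᵥ ⇑(hM.eigenvectorBasis l) = if k = l then 1 else 0 := by
  rw [← orthonormal_iff_ite.1 hM.eigenvectorBasis.orthonormal k l,
    EuclideanSpace.inner_eq_star_dotProduct, star_trivial, dotProduct_comm]

lemma dotProduct_eq_sum_eigenvectorBasis (x y : n → ℝ) :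
    x ⬝ᵥ y = ∑ k, (⇑(hM.eigenvectorBasis k) ⬝ᵥ x) * (⇑(hM.eigenvectorBasis k) ⬝ᵥ y) := by
  have h := hM.eigenvectorBasis.sum_inner_mul_inner (WithLp.toLp 2 x) (WithLp.toLp 2 y)
  simp only [EuclideanSpace.inner_eq_star_dotProduct, star_trivial] at h
  rw [dotProduct_comm, ← h]
  exact sum_congr rfl fun k _ => by rw [dotProduct_comm y]

lemma eigenvectorBasis_dotProduct_mulVec (k : n) (x : n → ℝ) :
    ⇑(hM.eigenvectorBasis k) ⬝ᵥ (M *ᵥ x) = hM.eigenvalues k * (⇑(hM.eigenvectorBasis k) ⬝ᵥ x) := by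
  have hMt : Mᵀ = M := by simpa using hM.eq
  rw [dotProduct_mulVec, ← mulVec_transpose, hMt, hM.mulVec_eigenvectorBasis, smul_dotProduct,
    smul_eq_mul]

end IsHermitian

end Matrix

section SingularValues

variable {m n : Type*} [Fintype m] [Fintype n] [DecidableEq n] (A : Matrix m n ℝ)

lemma eigenvalues_transpose_mul_self_nonneg (k : n) :
    0 ≤ (isHermitian_transpose_mul_self A).eigenvalues k := by
  have h := posSemidef_conjTranspose_mul_self A
  rw [conjTranspose_eq_transpose_of_trivial] at h
  exact h.eigenvalues_nonneg k

lemma svList_pairwise : (svList A).Pairwise (· ≥ ·) := List.pairwise_insertionSort _ _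

lemma coe_svList : (svList A : Multiset ℝ) =
    univ.val.map fun k => √((isHermitian_transpose_mul_self A).eigenvalues k) := by
  rw [svList, Multiset.coe_eq_coe.2 (List.perm_insertionSort _ _), Multiset.coe_toList]

lemma sv_nonneg (k : ℕ) : 0 ≤ sv A k := by
  rcases lt_or_ge (k - 1) (svList A).length with hk | hk
  · rw [sv, List.getD_eq_getElem _ _ hk]
    have hmem : (svList A)[k - 1] ∈ (svList A : Multiset ℝ) := List.getElem_mem hk
    rw [coe_svList] at hmem
    obtain ⟨i, -, hi⟩ := Multiset.mem_map.1 hmem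
    exact hi ▸ Real.sqrt_nonneg _
  · rw [sv, List.getD_eq_default _ _ hk]

lemma two_le_card_of_sv_two_pos (h : 0 < sv A 2) : 2 ≤ Fintype.card n := by
  by_contra hn
  rw [sv, List.getD_eq_default _ _ (by
    rw [length_eq_card_of_coe_eq_map (coe_svList A)]; omega)] at h
  exact h.false

/-- Min–max, upper half; `w` is a top right singular vector of `A`. -/
lemma exists_forall_dotProduct_eq_zero_mulVec_le :
    ∃ w : n → ℝ, ∀ v, w ⬝ᵥ v = 0 → (A *ᵥ v) ⬝ᵥ (A *ᵥ v) ≤ sv A 2 ^ 2 * (v ⬝ᵥ v) := by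
  rcases isEmpty_or_nonempty n with _ | _
  · exact ⟨0, fun v _ => by simp [Subsingleton.elim v 0]⟩
  set hA := isHermitian_transpose_mul_self A
  obtain ⟨i₀, hi₀⟩ := exists_forall_ne_le_getD_one (svList_pairwise A) (coe_svList A)
  refine ⟨hA.eigenvectorBasis i₀, fun v hv => ?_⟩
  rw [mulVec_dotProduct_mulVec, hA.dotProduct_eq_sum_eigenvectorBasis v,
    hA.dotProduct_eq_sum_eigenvectorBasis v v, mul_sum]
  refine sum_le_sum fun k _ => ?_
  rw [hA.eigenvectorBasis_dotProduct_mulVec]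
  by_cases hk : k = i₀
  · simp [hk, hv]
  · have hμ : hA.eigenvalues k ≤ sv A 2 ^ 2 :=
      (Real.sqrt_le_left (sv_nonneg A 2)).1 (hi₀ k hk)
    nlinarith [mul_self_nonneg (⇑(hA.eigenvectorBasis k) ⬝ᵥ v)]

/-- Min–max, lower half: every hyperplane meets the span of two top right singular vectors. -/
lemma exists_dotProduct_eq_zero_sq_sv_two_le (hn : 2 ≤ Fintype.card n) (w : n → ℝ) :
    ∃ v, w ⬝ᵥ v = 0 ∧ 0 < v ⬝ᵥ v ∧ sv A 2 ^ 2 * (v ⬝ᵥ v) ≤ (A *ᵥ v) ⬝ᵥ (A *ᵥ v) := by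
  set hA := isHermitian_transpose_mul_self A
  obtain ⟨i₁, i₂, hne, h₁, h₂⟩ := exists_ne_getD_one_le (svList_pairwise A) (coe_svList A) hn
  have hμ₁ : sv A 2 ^ 2 ≤ hA.eigenvalues i₁ :=
    (Real.le_sqrt (sv_nonneg A 2) (eigenvalues_transpose_mul_self_nonneg A i₁)).1 h₁
  have hμ₂ : sv A 2 ^ 2 ≤ hA.eigenvalues i₂ :=
    (Real.le_sqrt (sv_nonneg A 2) (eigenvalues_transpose_mul_self_nonneg A i₂)).1 h₂
  set e₁ := ⇑(hA.eigenvectorBasis i₁)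
  set e₂ := ⇑(hA.eigenvectorBasis i₂)
  obtain ⟨α, β, hαβ, hw⟩ : ∃ α β : ℝ, 0 < α ^ 2 + β ^ 2 ∧ α * (w ⬝ᵥ e₁) + β * (w ⬝ᵥ e₂) = 0 := by
    by_cases h : w ⬝ᵥ e₁ = 0
    · exact ⟨1, 0, by norm_num, by simp [h]⟩
    · exact ⟨-(w ⬝ᵥ e₂), w ⬝ᵥ e₁, by positivity, by ring⟩
  refine ⟨α • e₁ + β • e₂, ?_, ?_, ?_⟩
  · simpa only [dotProduct_add, dotProduct_smul, smul_eq_mul] using hw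
  · simp only [dotProduct_add, add_dotProduct, dotProduct_smul, smul_dotProduct, smul_eq_mul, e₁,
      e₂, hA.eigenvectorBasis_dotProduct, hne, hne.symm, if_true, if_false]
    nlinarith
  · simp only [mulVec_dotProduct_mulVec, mulVec_add, mulVec_smul, hA.mulVec_eigenvectorBasis,
      dotProduct_add, add_dotProduct, dotProduct_smul, smul_dotProduct, smul_eq_mul, e₁, e₂,
      hA.eigenvectorBasis_dotProduct, hne, hne.symm, if_true, if_false]
    nlinarith [mul_le_mul_of_nonneg_left hμ₁ (sq_nonneg α),
      mul_le_mul_of_nonneg_left hμ₂ (sq_nonneg β)]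

end SingularValues

section DiagonalScaling

variable {m n : Type*} [Fintype m] [Fintype n] [DecidableEq m] [DecidableEq n]

lemma diagonal_mulVec_dotProduct_le {a : n → ℝ} {ρ : ℝ} (ha : ∀ i, |a i| ≤ ρ) (x : n → ℝ) :
    (diagonal a *ᵥ x) ⬝ᵥ (diagonal a *ᵥ x) ≤ ρ ^ 2 * (x ⬝ᵥ x) := by
  simp only [mulVec_diagonal, dotProduct, mul_sum]
  refine sum_le_sum fun i _ => ?_
  have h : a i ^ 2 ≤ ρ ^ 2 := sq_le_sq.2 ((ha i).trans (le_abs_self ρ))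
  nlinarith [mul_self_nonneg (x i)]

lemma sv_two_diagonal_mul_mul_diagonal_le (C : Matrix m n ℝ) {a : m → ℝ} {b : n → ℝ} {ρ κ : ℝ}
    (hρ : 0 ≤ ρ) (hκ : 0 ≤ κ) (ha : ∀ i, |a i| ≤ ρ) (hb : ∀ j, |b j| ≤ κ) :
    sv (diagonal a * C * diagonal b) 2 ≤ ρ * κ * sv C 2 := by
  set B := diagonal a * C * diagonal b
  rcases le_or_gt (sv B 2) 0 with hB | hB
  · exact hB.trans (by have := sv_nonneg C 2; positivity)
  obtain ⟨w, hw⟩ := exists_forall_dotProduct_eq_zero_mulVec_le C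
  obtain ⟨v, hv, hvv, hBv⟩ := exists_dotProduct_eq_zero_sq_sv_two_le B
    (two_le_card_of_sv_two_pos B hB) (diagonal b *ᵥ w)
  have hCv : (C *ᵥ (diagonal b *ᵥ v)) ⬝ᵥ (C *ᵥ (diagonal b *ᵥ v)) ≤
      sv C 2 ^ 2 * ((diagonal b *ᵥ v) ⬝ᵥ (diagonal b *ᵥ v)) := by
    refine hw _ ?_
    rwa [dotProduct_mulVec, ← mulVec_transpose, diagonal_transpose]
  have key : sv B 2 ^ 2 * (v ⬝ᵥ v) ≤ (ρ * κ * sv C 2) ^ 2 * (v ⬝ᵥ v) :=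
    calc sv B 2 ^ 2 * (v ⬝ᵥ v) ≤ (B *ᵥ v) ⬝ᵥ (B *ᵥ v) := hBv
      _ ≤ ρ ^ 2 * ((C *ᵥ (diagonal b *ᵥ v)) ⬝ᵥ (C *ᵥ (diagonal b *ᵥ v))) := by
        simp only [B, ← mulVec_mulVec]
        exact diagonal_mulVec_dotProduct_le ha _
      _ ≤ ρ ^ 2 * (sv C 2 ^ 2 * (κ ^ 2 * (v ⬝ᵥ v))) := by
        gcongr
        exact hCv.trans (by gcongr; exact diagonal_mulVec_dotProduct_le hb v)
      _ = (ρ * κ * sv C 2) ^ 2 * (v ⬝ᵥ v) := by ring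
  have hC := sv_nonneg C 2
  exact (pow_le_pow_iff_left₀ (sv_nonneg B 2) (by positivity) two_ne_zero).1
    (le_of_mul_le_mul_right key hvv)

end DiagonalScaling

section BipartiteGraph

variable {m n : ℕ} (B : Matrix (Fin m) (Fin n) ℝ)

def bipDeg (x : Fin m ⊕ Fin n) : ℝ := ∑ u, bipWeight B x u

@[simp]
lemma bipDeg_inl (i : Fin m) : bipDeg B (.inl i) = ∑ j, B i j := by
  simp [bipDeg, Fintype.sum_sum_type, bipWeight]

@[simp]
lemma bipDeg_inr (j : Fin n) : bipDeg B (.inr j) = ∑ i, B i j := by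
  simp [bipDeg, Fintype.sum_sum_type, bipWeight]

lemma bipVol_eq_sum (S : Finset (Fin m ⊕ Fin n)) : bipVol B S = ∑ x ∈ S, bipDeg B x := rfl

lemma bipCut_eq (S : Finset (Fin m ⊕ Fin n)) :
    bipCut B S = ∑ i, ∑ j, B i j *
      |(if .inl i ∈ S then 1 else 0) - (if .inr j ∈ S then 1 else 0)| := by
  classical
  have h : ∀ (T : Finset (Fin m ⊕ Fin n)) (f : Fin m ⊕ Fin n → ℝ),
      ∑ x ∈ T, f x = ∑ x, if x ∈ T then f x else 0 := fun T f => by rw [sum_ite_mem, univ_inter]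
  rw [bipCut, h S]
  simp_rw [h Sᶜ]
  simp only [Fintype.sum_sum_type, bipWeight, mem_compl, ite_self, sum_const_zero, zero_add,
    add_zero, ite_sum_zero]
  rw [sum_comm (s := (univ : Finset (Fin n))), ← sum_add_distrib]
  refine sum_congr rfl fun i _ => ?_
  rw [← sum_add_distrib]
  refine sum_congr rfl fun j _ => ?_
  split_ifs <;> simp

def bipNormSq (g : Fin m ⊕ Fin n → ℝ) : ℝ := ∑ x, bipDeg B x * g x ^ 2

def bipEnergy (g : Fin m ⊕ Fin n → ℝ) : ℝ :=
  ∑ i, ∑ j, B i j * (g (.inl i) - g (.inr j)) ^ 2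

lemma bipNormSq_eq_sum (g : Fin m ⊕ Fin n → ℝ) :
    bipNormSq B g = ∑ i, ∑ j, B i j * (g (.inl i) ^ 2 + g (.inr j) ^ 2) := by
  simp only [bipNormSq, Fintype.sum_sum_type, bipDeg_inl, bipDeg_inr, sum_mul, mul_add,
    sum_add_distrib]
  rw [sum_comm (s := (univ : Finset (Fin n)))]

lemma bipEnergy_eq (g : Fin m ⊕ Fin n → ℝ) :
    bipEnergy B g = bipNormSq B g - 2 * ∑ i, ∑ j, B i j * g (.inl i) * g (.inr j) := by
  simp only [bipEnergy, bipNormSq_eq_sum, mul_sum, ← sum_sub_distrib]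
  exact sum_congr rfl fun i _ => sum_congr rfl fun j _ => by ring

variable {B} (hB : ∀ i j, 0 ≤ B i j)
include hB

lemma bipWeight_nonneg (x y : Fin m ⊕ Fin n) : 0 ≤ bipWeight B x y := by
  rcases x with i | j <;> rcases y with i' | j' <;> simp [bipWeight, hB]

lemma bipDeg_nonneg (x : Fin m ⊕ Fin n) : 0 ≤ bipDeg B x :=
  sum_nonneg fun _ _ => bipWeight_nonneg hB _ _

lemma bipVol_nonneg (S : Finset (Fin m ⊕ Fin n)) : 0 ≤ bipVol B S :=
  sum_nonneg fun x _ => bipDeg_nonneg hB x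

lemma bipCut_nonneg (S : Finset (Fin m ⊕ Fin n)) : 0 ≤ bipCut B S :=
  sum_nonneg fun _ _ => sum_nonneg fun _ _ => bipWeight_nonneg hB _ _

lemma bipNormSq_nonneg (g : Fin m ⊕ Fin n → ℝ) : 0 ≤ bipNormSq B g :=
  sum_nonneg fun x _ => mul_nonneg (bipDeg_nonneg hB x) (sq_nonneg _)

lemma bipEnergy_nonneg (g : Fin m ⊕ Fin n → ℝ) : 0 ≤ bipEnergy B g :=
  sum_nonneg fun i _ => sum_nonneg fun j _ => mul_nonneg (hB i j) (sq_nonneg _)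

lemma bipCut_div_bipVol_nonneg (S : Finset (Fin m ⊕ Fin n)) : 0 ≤ bipCut B S / bipVol B S :=
  div_nonneg (bipCut_nonneg hB S) (bipVol_nonneg hB S)

lemma bipConductance_nonneg : 0 ≤ bipConductance B :=
  Real.sInf_nonneg (by rintro x ⟨S, -, -, rfl⟩; exact bipCut_div_bipVol_nonneg hB S)

lemma bipConductance_le {S : Finset (Fin m ⊕ Fin n)} (hS : S.Nonempty)
    (hvol : bipVol B S ≤ bipVol B univ / 2) : bipConductance B ≤ bipCut B S / bipVol B S :=
  csInf_le ⟨0, by rintro x ⟨S, -, -, rfl⟩; exact bipCut_div_bipVol_nonneg hB S⟩ ⟨S, hS, hvol, rfl⟩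

lemma bipConductance_le_one (hm : 0 < m) : bipConductance B ≤ 1 := by
  set S : Finset (Fin m ⊕ Fin n) := univ.map .inl
  have hvol : bipVol B S = ∑ i, ∑ j, B i j := by simp [S, bipVol_eq_sum]
  have hcut : bipCut B S = ∑ i, ∑ j, B i j := by simp [S, bipCut_eq]
  have hvol_univ : bipVol B univ = 2 * ∑ i, ∑ j, B i j := by
    rw [bipVol_eq_sum, Fintype.sum_sum_type]
    simp only [bipDeg_inl, bipDeg_inr]
    rw [sum_comm (s := (univ : Finset (Fin n)))]
    ring
  calc bipConductance B ≤ bipCut B S / bipVol B S :=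
        bipConductance_le hB ⟨.inl ⟨0, hm⟩, mem_map_of_mem _ (mem_univ _)⟩
          (by rw [hvol, hvol_univ]; linarith)
    _ ≤ 1 := by rw [hvol, hcut]; exact div_self_le_one _

end BipartiteGraph

section LayerCake

noncomputable def predIn (T : Finset ℝ) (t : ℝ) : ℝ :=
  if h : {s ∈ T | s < t}.Nonempty then {s ∈ T | s < t}.max' h else 0

variable {T : Finset ℝ} {t : ℝ}

lemma predIn_lt (ht : 0 < t) : predIn T t < t := by
  unfold predIn
  split_ifs with h
  · exact (mem_filter.1 (max'_mem _ h)).2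
  · exact ht

lemma predIn_eq_zero_or_mem (T : Finset ℝ) (t : ℝ) : predIn T t = 0 ∨ predIn T t ∈ T := by
  unfold predIn
  split_ifs with h
  · exact .inr (mem_filter.1 (max'_mem _ h)).1
  · exact .inl rfl

lemma le_predIn {s : ℝ} (hs : s ∈ T) (hst : s < t) : s ≤ predIn T t := by
  have hmem : s ∈ {s ∈ T | s < t} := mem_filter.2 ⟨hs, hst⟩
  rw [predIn, dif_pos ⟨s, hmem⟩]
  exact le_max' _ _ hmem

variable (hT : ∀ t ∈ T, 0 < t)
include hT

lemma sum_filter_le_sub_predIn {a : ℝ} (ha : a = 0 ∨ a ∈ T) :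
    ∑ t ∈ T with t ≤ a, (t - predIn T t) = a := by
  induction hN : #{t ∈ T | t ≤ a} using Nat.strong_induction_on generalizing a with
  | _ N ih =>
  rcases ha with rfl | ha
  · rw [filter_false_of_mem fun t ht => not_le.2 (hT t ht), sum_empty]
  have hpred := predIn_lt (T := T) (hT a ha)
  have hsplit : {t ∈ T | t ≤ a} = insert a {t ∈ T | t ≤ predIn T a} := by
    ext t
    simp only [mem_filter, mem_insert]
    constructor
    · rintro ⟨htT, hta⟩
      rcases hta.eq_or_lt with rfl | hta
      exacts [.inl rfl, .inr ⟨htT, le_predIn htT hta⟩]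
    · rintro (rfl | ⟨htT, htp⟩)
      exacts [⟨ha, le_rfl⟩, ⟨htT, htp.trans hpred.le⟩]
  have hnot : a ∉ {t ∈ T | t ≤ predIn T a} := fun h => (mem_filter.1 h).2.not_gt hpred
  have hcard : #{t ∈ T | t ≤ predIn T a} < N := by
    rw [← hN, hsplit, card_insert_of_notMem hnot]
    exact Nat.lt_succ_self _
  rw [hsplit, sum_insert hnot, ih _ hcard (predIn_eq_zero_or_mem T a) rfl]
  ring

lemma sum_sub_predIn_mul_ite {a : ℝ} (ha : a = 0 ∨ a ∈ T) :
    ∑ t ∈ T, (t - predIn T t) * (if t ≤ a then 1 else 0) = a := by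
  simp only [mul_ite, mul_one, mul_zero, ← sum_filter]
  exact sum_filter_le_sub_predIn hT ha

lemma sum_sub_predIn_mul_abs {a b : ℝ} (ha : a = 0 ∨ a ∈ T) (hb : b = 0 ∨ b ∈ T) :
    ∑ t ∈ T, (t - predIn T t) *
      |(if t ≤ a then 1 else 0) - (if t ≤ b then 1 else 0)| = |a - b| := by
  wlog hab : a ≤ b generalizing a b
  · simpa only [abs_sub_comm] using this hb ha (le_of_not_ge hab)
  have h : ∀ t, |(if t ≤ a then (1 : ℝ) else 0) - (if t ≤ b then 1 else 0)| =
      (if t ≤ b then 1 else 0) - (if t ≤ a then 1 else 0) := fun t => by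
    split_ifs with h₁ h₂ <;> first | exact absurd (h₁.trans hab) h₂ | norm_num
  simp only [h, mul_sub, sum_sub_distrib, sum_sub_predIn_mul_ite hT ha,
    sum_sub_predIn_mul_ite hT hb,
    abs_sub_comm a b, abs_of_nonneg (sub_nonneg.2 hab)]

end LayerCake

lemma exists_div_mul_sum_le {ι : Type*} {s : Finset ι} (hs : s.Nonempty) {w a b : ι → ℝ}
    (hw : ∀ i ∈ s, 0 ≤ w i) (hb : ∀ i ∈ s, 0 < b i) :
    ∃ i ∈ s, a i / b i * ∑ j ∈ s, w j * b j ≤ ∑ j ∈ s, w j * a j := by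
  obtain ⟨i, hi, hmin⟩ := s.exists_min_image (fun j => a j / b j) hs
  refine ⟨i, hi, ?_⟩
  rw [mul_sum]
  refine sum_le_sum fun j hj => ?_
  calc a i / b i * (w j * b j) = w j * (a i / b i * b j) := by ring
    _ ≤ w j * a j := mul_le_mul_of_nonneg_left ((le_div_iff₀ (hb j hj)).1 (hmin j hj)) (hw j hj)

section Superlevel

variable {V : Type*} [Fintype V]

noncomputable def posValues (u : V → ℝ) : Finset ℝ := {t ∈ univ.image u | 0 < t}

noncomputable def superlevel (u : V → ℝ) (t : ℝ) : Finset V := {x | t ≤ u x}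

variable {u : V → ℝ}

lemma pos_of_mem_posValues {t : ℝ} (ht : t ∈ posValues u) : 0 < t := (mem_filter.1 ht).2

lemma eq_zero_or_mem_posValues (hu : ∀ x, 0 ≤ u x) (x : V) : u x = 0 ∨ u x ∈ posValues u :=
  (hu x).eq_or_lt.imp Eq.symm fun h => mem_filter.2 ⟨mem_image_of_mem u (mem_univ x), h⟩

lemma nonempty_superlevel {t : ℝ} (ht : t ∈ posValues u) : (superlevel u t).Nonempty := by
  obtain ⟨x, -, hx⟩ := mem_image.1 (mem_filter.1 ht).1
  exact ⟨x, mem_filter.2 ⟨mem_univ x, hx.ge⟩⟩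

end Superlevel

section Coarea

variable {m n : ℕ} (B : Matrix (Fin m) (Fin n) ℝ) {u : Fin m ⊕ Fin n → ℝ} (hu : ∀ x, 0 ≤ u x)
include hu

lemma sum_sub_predIn_mul_bipVol_superlevel :
    ∑ t ∈ posValues u, (t - predIn (posValues u) t) * bipVol B (superlevel u t) =
      ∑ x, bipDeg B x * u x := by
  simp only [bipVol_eq_sum, superlevel, sum_filter, mul_sum]
  rw [sum_comm]
  refine sum_congr rfl fun x _ => ?_
  conv_rhs => rw [← sum_sub_predIn_mul_ite (fun _ => pos_of_mem_posValues)
    (eq_zero_or_mem_posValues hu x), mul_sum]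
  exact sum_congr rfl fun t _ => by split_ifs <;> ring

lemma sum_sub_predIn_mul_bipCut_superlevel :
    ∑ t ∈ posValues u, (t - predIn (posValues u) t) * bipCut B (superlevel u t) =
      ∑ i, ∑ j, B i j * |u (.inl i) - u (.inr j)| := by
  simp only [bipCut_eq, superlevel, mem_filter, mem_univ, true_and, mul_sum]
  rw [sum_comm]
  refine sum_congr rfl fun i _ => ?_
  rw [sum_comm]
  refine sum_congr rfl fun j _ => ?_
  conv_rhs => rw [← sum_sub_predIn_mul_abs (fun _ => pos_of_mem_posValues)
    (eq_zero_or_mem_posValues hu _) (eq_zero_or_mem_posValues hu _), mul_sum]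
  exact sum_congr rfl fun t _ => by ring

lemma exists_bipCut_div_bipVol_superlevel_mul_le (hd : ∀ x, 0 < bipDeg B x)
    (hN : 0 < ∑ x, bipDeg B x * u x) :
    ∃ t ∈ posValues u, bipCut B (superlevel u t) / bipVol B (superlevel u t) *
      ∑ x, bipDeg B x * u x ≤ ∑ i, ∑ j, B i j * |u (.inl i) - u (.inr j)| := by
  have hT : (posValues u).Nonempty := by
    by_contra hT
    refine hN.ne' (sum_eq_zero fun x _ => ?_)
    rcases eq_zero_or_mem_posValues hu x with h | h
    · rw [h, mul_zero]
    · exact absurd ⟨_, h⟩ hT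
  have hvol : ∀ t ∈ posValues u, 0 < bipVol B (superlevel u t) := fun t ht => by
    obtain ⟨x, hx⟩ := nonempty_superlevel ht
    exact (hd x).trans_le (single_le_sum (fun y _ => (hd y).le) hx)
  rw [← sum_sub_predIn_mul_bipVol_superlevel B hu, ← sum_sub_predIn_mul_bipCut_superlevel B hu]
  exact exists_div_mul_sum_le hT
    (fun t ht => sub_nonneg.2 (predIn_lt (pos_of_mem_posValues ht)).le) hvol

end Coarea

section Sweep

variable {m n : ℕ} {B : Matrix (Fin m) (Fin n) ℝ} (hB : ∀ i j, 0 ≤ B i j)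
include hB

lemma sq_sum_abs_sq_sub_sq_le (ψ : Fin m ⊕ Fin n → ℝ) :
    (∑ i, ∑ j, B i j * |ψ (.inl i) ^ 2 - ψ (.inr j) ^ 2|) ^ 2 ≤
      2 * bipEnergy B ψ * bipNormSq B ψ := by
  set f : Fin m × Fin n → ℝ := fun p => √(B p.1 p.2) * |ψ (.inl p.1) - ψ (.inr p.2)|
  set g : Fin m × Fin n → ℝ := fun p => √(B p.1 p.2) * |ψ (.inl p.1) + ψ (.inr p.2)|
  have hfg : ∑ i, ∑ j, B i j * |ψ (.inl i) ^ 2 - ψ (.inr j) ^ 2| = ∑ p, f p * g p := by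
    rw [← Fintype.sum_prod_type']
    refine sum_congr rfl fun p _ => ?_
    rw [mul_mul_mul_comm, Real.mul_self_sqrt (hB _ _), ← abs_mul, sq_sub_sq, mul_comm (_ + _)]
  have hf : ∑ p, f p ^ 2 = bipEnergy B ψ := by
    rw [bipEnergy, ← Fintype.sum_prod_type']
    simp only [f, mul_pow, Real.sq_sqrt (hB _ _), sq_abs]
  have hg : ∑ p, g p ^ 2 ≤ 2 * bipNormSq B ψ := by
    rw [bipNormSq_eq_sum, ← Fintype.sum_prod_type', mul_sum]
    refine sum_le_sum fun p _ => ?_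
    simp only [g, mul_pow, Real.sq_sqrt (hB _ _), sq_abs]
    nlinarith [hB p.1 p.2, mul_nonneg (hB p.1 p.2) (sq_nonneg (ψ (.inl p.1) - ψ (.inr p.2)))]
  calc (∑ i, ∑ j, B i j * |ψ (.inl i) ^ 2 - ψ (.inr j) ^ 2|) ^ 2
      ≤ (∑ p, f p ^ 2) * ∑ p, g p ^ 2 := hfg ▸ sum_mul_sq_le_sq_mul_sq _ f g
    _ ≤ bipEnergy B ψ * (2 * bipNormSq B ψ) := by
      rw [hf]; exact mul_le_mul_of_nonneg_left hg (bipEnergy_nonneg hB ψ)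
    _ = 2 * bipEnergy B ψ * bipNormSq B ψ := by ring

/-- Sweep cuts: some superlevel set of `ψ²` has conductance at most `√(2K)`. -/
theorem bipConductance_sq_le_of_nonneg (hd : ∀ x, 0 < bipDeg B x) {ψ : Fin m ⊕ Fin n → ℝ}
    {K : ℝ} (hψ : ∀ x, 0 ≤ ψ x) (hsupp : bipVol B {x | 0 < ψ x} ≤ bipVol B univ / 2)
    (hN : 0 < bipNormSq B ψ) (hE : bipEnergy B ψ ≤ K * bipNormSq B ψ) :
    bipConductance B ^ 2 ≤ 2 * K := by
  set u : Fin m ⊕ Fin n → ℝ := fun x => ψ x ^ 2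
  obtain ⟨t, ht, hρ⟩ :=
    exists_bipCut_div_bipVol_superlevel_mul_le B (fun x => sq_nonneg (ψ x)) hd hN
  set ρ := bipCut B (superlevel u t) / bipVol B (superlevel u t)
  have hsub : superlevel u t ⊆ ({x | 0 < ψ x} : Finset _) := fun x hx => by
    have h : t ≤ ψ x ^ 2 := (mem_filter.1 hx).2
    refine mem_filter.2 ⟨mem_univ x, (hψ x).lt_of_ne fun h0 => ?_⟩
    rw [← h0] at h
    linarith [pos_of_mem_posValues ht]
  have hφ : bipConductance B ≤ ρ := bipConductance_le hB (nonempty_superlevel ht)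
    ((sum_le_sum_of_subset_of_nonneg hsub fun x _ _ => (hd x).le).trans hsupp)
  have hρN : (ρ * bipNormSq B ψ) ^ 2 ≤ (2 * K) * bipNormSq B ψ ^ 2 :=
    calc (ρ * bipNormSq B ψ) ^ 2 ≤ (∑ i, ∑ j, B i j * |u (.inl i) - u (.inr j)|) ^ 2 :=
          pow_le_pow_left₀ (mul_nonneg (bipCut_div_bipVol_nonneg hB _) hN.le) hρ 2
      _ ≤ 2 * bipEnergy B ψ * bipNormSq B ψ := sq_sum_abs_sq_sub_sq_le hB ψ
      _ ≤ 2 * K * bipNormSq B ψ ^ 2 := by nlinarith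
  have hρK : ρ ^ 2 ≤ 2 * K :=
    le_of_mul_le_mul_right (by linarith [hρN]) (by positivity : 0 < bipNormSq B ψ ^ 2)
  exact (pow_le_pow_left₀ (bipConductance_nonneg hB) hφ 2).trans hρK

end Sweep

lemma exists_weighted_median {V : Type*} [Fintype V] [Nonempty V] (d g : V → ℝ)
    (hd : ∀ x, 0 ≤ d x) :
    ∃ c, ∑ x with c < g x, d x ≤ (∑ x, d x) / 2 ∧ ∑ x with g x < c, d x ≤ (∑ x, d x) / 2 := by
  have hD : 0 ≤ ∑ x, d x := sum_nonneg fun x _ => hd x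
  set F := {v ∈ univ.image g | ∑ x with v < g x, d x ≤ (∑ x, d x) / 2}
  have hF : F.Nonempty := by
    obtain ⟨x, -, hx⟩ := exists_max_image univ g univ_nonempty
    refine ⟨g x, mem_filter.2 ⟨mem_image_of_mem g (mem_univ x), ?_⟩⟩
    rw [filter_false_of_mem fun y _ => not_lt.2 (hx y (mem_univ y)), sum_empty]
    positivity
  set c := F.min' hF
  refine ⟨c, (mem_filter.1 (min'_mem F hF)).2, ?_⟩
  by_contra! hlow
  obtain ⟨y, hy⟩ : ({x | g x < c} : Finset V).Nonempty := by
    by_contra h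
    rw [not_nonempty_iff_eq_empty.1 h, sum_empty] at hlow
    linarith
  obtain ⟨x₀, hx₀, hmax⟩ := exists_max_image _ g ⟨y, hy⟩
  have hx₀c : g x₀ < c := (mem_filter.1 hx₀).2
  have hset : ({x | g x₀ < g x} : Finset V) = ({x | ¬ g x < c} : Finset V) :=
    filter_congr fun x _ =>
    ⟨fun h h' => (hmax x (mem_filter.2 ⟨mem_univ x, h'⟩)).not_gt h,
      fun h => hx₀c.trans_le (not_lt.1 h)⟩
  have hmem : g x₀ ∈ F := by
    refine mem_filter.2 ⟨mem_image_of_mem g (mem_univ x₀), ?_⟩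
    have := sum_filter_add_sum_filter_not univ (fun x => g x < c) d
    rw [hset]
    linarith
  exact (min'_le F _ hmem).not_gt hx₀c

lemma posPart_sq_add_negPart_sq (a : ℝ) : a⁺ ^ 2 + a⁻ ^ 2 = a ^ 2 := by
  rcases le_total 0 a with h | h <;> simp [h]

lemma sq_posPart_sub_add_sq_negPart_sub_le (a b : ℝ) :
    (a⁺ - b⁺) ^ 2 + (a⁻ - b⁻) ^ 2 ≤ (a - b) ^ 2 := by
  rcases le_total 0 a with ha | ha <;> rcases le_total 0 b with hb | hb <;> simp [ha, hb] <;>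
    nlinarith

lemma exists_pos_le_mul_of_add_le {E₁ E₂ N₁ N₂ K : ℝ} (hE₁ : 0 ≤ E₁) (hE₂ : 0 ≤ E₂)
    (hN₁ : 0 ≤ N₁) (hN₂ : 0 ≤ N₂) (hN : 0 < N₁ + N₂) (h : E₁ + E₂ ≤ K * (N₁ + N₂)) :
    (0 < N₁ ∧ E₁ ≤ K * N₁) ∨ (0 < N₂ ∧ E₂ ≤ K * N₂) := by
  by_contra! h'
  rcases hN₁.eq_or_lt with rfl | h₁
  · have := h'.2 (by linarith)
    linarith
  rcases hN₂.eq_or_lt with rfl | h₂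
  · have := h'.1 h₁
    linarith
  linarith [h'.1 h₁, h'.2 h₂]

section Cheeger

variable {m n : ℕ} {B : Matrix (Fin m) (Fin n) ℝ}

lemma bipEnergy_sub_const (g : Fin m ⊕ Fin n → ℝ) (c : ℝ) :
    bipEnergy B (fun x => g x - c) = bipEnergy B g := by
  simp only [bipEnergy, sub_sub_sub_cancel_right]

lemma bipNormSq_posPart_add_negPart (g : Fin m ⊕ Fin n → ℝ) :
    bipNormSq B (fun x => (g x)⁺) + bipNormSq B (fun x => (g x)⁻) = bipNormSq B g := by
  simp only [bipNormSq, ← sum_add_distrib, ← mul_add, posPart_sq_add_negPart_sq]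

variable (hB : ∀ i j, 0 ≤ B i j)
include hB

lemma bipEnergy_posPart_add_negPart_le (g : Fin m ⊕ Fin n → ℝ) :
    bipEnergy B (fun x => (g x)⁺) + bipEnergy B (fun x => (g x)⁻) ≤ bipEnergy B g := by
  simp only [bipEnergy, ← sum_add_distrib, ← mul_add]
  exact sum_le_sum fun i _ => sum_le_sum fun j _ =>
    mul_le_mul_of_nonneg_left (sq_posPart_sub_add_sq_negPart_sub_le _ _) (hB i j)

lemma bipNormSq_le_bipNormSq_sub_const {g : Fin m ⊕ Fin n → ℝ} (hg : ∑ x, bipDeg B x * g x = 0)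
    (c : ℝ) : bipNormSq B g ≤ bipNormSq B (fun x => g x - c) := by
  have h : bipNormSq B (fun x => g x - c) =
      bipNormSq B g - 2 * c * ∑ x, bipDeg B x * g x + c ^ 2 * ∑ x, bipDeg B x := by
    simp only [bipNormSq, mul_sum, ← sum_sub_distrib, ← sum_add_distrib]
    exact sum_congr rfl fun x _ => by ring
  rw [h, hg]
  nlinarith [sum_nonneg fun x (_ : x ∈ univ) => bipDeg_nonneg hB x]

/-- Cheeger's inequality for `G_B`: shift `g` to a weighted median and sweep whichever of its
positive and negative parts has the smaller Rayleigh quotient. -/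
theorem bipConductance_sq_le (hd : ∀ x, 0 < bipDeg B x) {g : Fin m ⊕ Fin n → ℝ} {K : ℝ}
    (hg : ∑ x, bipDeg B x * g x = 0) (hN : 0 < bipNormSq B g)
    (hE : bipEnergy B g ≤ K * bipNormSq B g) : bipConductance B ^ 2 ≤ 2 * K := by
  have : Nonempty (Fin m ⊕ Fin n) := univ_nonempty_iff.1 (nonempty_of_sum_ne_zero hN.ne')
  have hK : 0 ≤ K := nonneg_of_mul_nonneg_left ((bipEnergy_nonneg hB g).trans hE) hN
  obtain ⟨c, hc₁, hc₂⟩ := exists_weighted_median (bipDeg B) g (bipDeg_nonneg hB)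
  set h : Fin m ⊕ Fin n → ℝ := fun x => g x - c
  set ψ₁ : Fin m ⊕ Fin n → ℝ := fun x => (h x)⁺
  set ψ₂ : Fin m ⊕ Fin n → ℝ := fun x => (h x)⁻
  have hsum : bipEnergy B ψ₁ + bipEnergy B ψ₂ ≤ K * (bipNormSq B ψ₁ + bipNormSq B ψ₂) :=
    calc _ ≤ bipEnergy B h := bipEnergy_posPart_add_negPart_le hB h
      _ = bipEnergy B g := bipEnergy_sub_const g c
      _ ≤ K * bipNormSq B g := hE
      _ ≤ K * (bipNormSq B ψ₁ + bipNormSq B ψ₂) := by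
        rw [bipNormSq_posPart_add_negPart]
        exact mul_le_mul_of_nonneg_left (bipNormSq_le_bipNormSq_sub_const hB hg c) hK
  have hsupp₁ : bipVol B {x | 0 < ψ₁ x} ≤ bipVol B univ / 2 := by
    simpa [bipVol_eq_sum, ψ₁, h] using hc₁
  have hsupp₂ : bipVol B {x | 0 < ψ₂ x} ≤ bipVol B univ / 2 := by
    simpa [bipVol_eq_sum, ψ₂, h] using hc₂
  have hpos : 0 < bipNormSq B ψ₁ + bipNormSq B ψ₂ := by
    rw [bipNormSq_posPart_add_negPart]
    exact hN.trans_le (bipNormSq_le_bipNormSq_sub_const hB hg c)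
  rcases exists_pos_le_mul_of_add_le (bipEnergy_nonneg hB ψ₁) (bipEnergy_nonneg hB ψ₂)
    (bipNormSq_nonneg hB ψ₁) (bipNormSq_nonneg hB ψ₂) hpos hsum with ⟨hN₁, hE₁⟩ | ⟨hN₂, hE₂⟩
  · exact bipConductance_sq_le_of_nonneg hB hd (fun x => posPart_nonneg _) hsupp₁ hN₁ hE₁
  · exact bipConductance_sq_le_of_nonneg hB hd (fun x => negPart_nonneg _) hsupp₂ hN₂ hE₂

end Cheeger

section Normalized

variable {m n : ℕ}

noncomputable def bipNormalize (B : Matrix (Fin m) (Fin n) ℝ) : Matrix (Fin m) (Fin n) ℝ :=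
  of fun i j => B i j / (√(∑ k, B i k) * √(∑ k, B k j))

variable {B : Matrix (Fin m) (Fin n) ℝ} (hB : ∀ i j, 0 ≤ B i j)
include hB

lemma sqrt_mul_bipNormalize_mul_sqrt (i : Fin m) (j : Fin n) :
    √(∑ k, B i k) * bipNormalize B i j * √(∑ k, B k j) = B i j := by
  rcases (hB i j).eq_or_lt with h | h
  · simp [bipNormalize, ← h]
  have hr : 0 < √(∑ k, B i k) :=
    Real.sqrt_pos.2 (h.trans_le (single_le_sum (fun k _ => hB i k) (mem_univ j)))
  have hc : 0 < √(∑ k, B k j) :=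
    Real.sqrt_pos.2 (h.trans_le (single_le_sum (fun k _ => hB k j) (mem_univ i)))
  simp only [bipNormalize, of_apply]
  field_simp

lemma diagonal_mul_bipNormalize_mul_diagonal :
    diagonal (fun i => √(∑ k, B i k)) * bipNormalize B * diagonal (fun j => √(∑ k, B k j)) = B := by
  ext i j
  simp only [mul_diagonal, diagonal_mul, sqrt_mul_bipNormalize_mul_sqrt hB]

/-- `[[0, C], [Cᵀ, 0]]` is the normalized adjacency matrix of `G_B`, with second eigenvalue
`σ₂(C)`. The test function is `(C v / σ₂(C), v)` in normalized coordinates, for a `v` on which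
`C` stretches by at least `σ₂(C)`, chosen so that the function is orthogonal to the degrees. -/
lemma exists_bipEnergy_le_of_sv_two_pos (hd : ∀ x, 0 < bipDeg B x)
    (hσ : 0 < sv (bipNormalize B) 2) :
    ∃ g : Fin m ⊕ Fin n → ℝ, ∑ x, bipDeg B x * g x = 0 ∧ 0 < bipNormSq B g ∧
      bipEnergy B g ≤ (1 - sv (bipNormalize B) 2) * bipNormSq B g := by
  set C := bipNormalize B
  set σ := sv C 2
  set r : Fin m → ℝ := fun i => √(∑ k, B i k)
  set c : Fin n → ℝ := fun j => √(∑ k, B k j)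
  have hBrc : ∀ i j, B i j = r i * C i j * c j := fun i j =>
    (sqrt_mul_bipNormalize_mul_sqrt hB i j).symm
  have hr : ∀ i, 0 < r i := fun i => Real.sqrt_pos.2 (by simpa using hd (.inl i))
  have hc : ∀ j, 0 < c j := fun j => Real.sqrt_pos.2 (by simpa using hd (.inr j))
  have hdr : ∀ i, bipDeg B (.inl i) = r i ^ 2 := fun i => by
    simp [r, Real.sq_sqrt (sum_nonneg fun k _ => hB i k)]
  have hdc : ∀ j, bipDeg B (.inr j) = c j ^ 2 := fun j => by
    simp [c, Real.sq_sqrt (sum_nonneg fun k _ => hB k j)]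
  clear_value r c
  obtain ⟨v, hv, hvv, hCv⟩ := exists_dotProduct_eq_zero_sq_sv_two_le C
    (two_le_card_of_sv_two_pos C hσ) (σ⁻¹ • (r ᵥ* C) + c)
  rw [add_dotProduct, smul_dotProduct, ← dotProduct_mulVec, smul_eq_mul] at hv
  set X := (C *ᵥ v) ⬝ᵥ (C *ᵥ v)
  have hX : 0 < X := lt_of_lt_of_le (by positivity) hCv
  set g : Fin m ⊕ Fin n → ℝ := Sum.elim (fun i => (C *ᵥ v) i / (σ * r i)) (fun j => v j / c j)
  have hg : ∑ x, bipDeg B x * g x = 0 := by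
    rw [← hv]
    simp only [Fintype.sum_sum_type, hdr, hdc, g, Sum.elim_inl, Sum.elim_inr, dotProduct, mul_sum]
    congr 1 <;> refine sum_congr rfl fun k _ => ?_
    · have := hr k
      field_simp
    · have := hc k
      field_simp
  have hN : bipNormSq B g = X / σ ^ 2 + v ⬝ᵥ v := by
    simp only [bipNormSq, Fintype.sum_sum_type, hdr, hdc, g, Sum.elim_inl, Sum.elim_inr, X,
      dotProduct, sum_div]
    congr 1 <;> refine sum_congr rfl fun k _ => ?_
    · have := hr k
      field_simp
    · have := hc k
      field_simp
  have hA : ∑ i, ∑ j, B i j * g (.inl i) * g (.inr j) = X / σ :=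
    calc ∑ i, ∑ j, B i j * g (.inl i) * g (.inr j) = ∑ i, (C *ᵥ v) i / σ * (C *ᵥ v) i := by
          refine sum_congr rfl fun i _ => ?_
          rw [mulVec, dotProduct, mul_sum]
          refine sum_congr rfl fun j _ => ?_
          have := hr i
          have := hc j
          simp only [g, Sum.elim_inl, Sum.elim_inr, hBrc, mulVec, dotProduct]
          field_simp
      _ = X / σ := by simp only [X, dotProduct, sum_div, div_mul_eq_mul_div]
  refine ⟨g, hg, hN ▸ by positivity, ?_⟩
  have key : (1 - σ) * (X / σ ^ 2 + v ⬝ᵥ v) - (X / σ ^ 2 + v ⬝ᵥ v - 2 * (X / σ)) =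
      (X - σ ^ 2 * (v ⬝ᵥ v)) / σ := by
    field_simp
    ring
  rw [bipEnergy_eq, hN, hA, ← sub_nonneg, key]
  exact div_nonneg (sub_nonneg.2 hCv) hσ.le

theorem sv_two_bipNormalize_le (hm : 0 < m) (hd : ∀ x, 0 < bipDeg B x) :
    sv (bipNormalize B) 2 ≤ 1 - bipConductance B ^ 2 / 2 := by
  rcases le_or_gt (sv (bipNormalize B) 2) 0 with hσ | hσ
  · nlinarith [bipConductance_le_one hB hm, bipConductance_nonneg hB]
  obtain ⟨g, hg, hN, hE⟩ := exists_bipEnergy_le_of_sv_two_pos hB hd hσ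
  linarith [bipConductance_sq_le hB hd hg hN hE]

end Normalized

theorem stmt16_general {m n : ℕ} (hm : 0 < m)
    (B : Matrix (Fin m) (Fin n) ℝ) (ε : ℝ) (hε0 : 0 ≤ ε) (hε : ε ≤ 1 / 2)
    (hB : ∀ i j, 0 ≤ B i j)
    (s : ℝ) (hs : s = ∑ i, ∑ j, B i j)
    (hrow : ∀ i, (1 - ε) * s / m ≤ ∑ j, B i j ∧ ∑ j, B i j ≤ (1 + ε) * s / m)
    (hcol : ∀ j, (1 - ε) * s / n ≤ ∑ i, B i j ∧ ∑ i, B i j ≤ (1 + ε) * s / n) :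
    sv B 2 ≤ (1 - bipConductance B ^ 2 / 2 + 3 * ε) * s / Real.sqrt (m * n) := by
  have hs0 : 0 ≤ s := hs ▸ sum_nonneg fun i _ => sum_nonneg fun j _ => hB i j
  have hx : 0 ≤ (1 + ε) * s := by positivity
  have hscale : sv B 2 ≤ (1 + ε) * s / √(m * n) * sv (bipNormalize B) 2 := by
    have h := sv_two_diagonal_mul_mul_diagonal_le (bipNormalize B)
      (Real.sqrt_nonneg ((1 + ε) * s / m)) (Real.sqrt_nonneg ((1 + ε) * s / n))
      (fun i => (abs_of_nonneg (Real.sqrt_nonneg _)).trans_le (Real.sqrt_le_sqrt (hrow i).2))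
      (fun j => (abs_of_nonneg (Real.sqrt_nonneg _)).trans_le (Real.sqrt_le_sqrt (hcol j).2))
    rwa [diagonal_mul_bipNormalize_mul_diagonal hB, Real.sqrt_div hx, Real.sqrt_div hx,
      div_mul_div_comm, Real.mul_self_sqrt hx, ← Real.sqrt_mul (Nat.cast_nonneg _)] at h
  rcases hs0.eq_or_lt with rfl | hspos
  · simpa using hscale
  have hε1 : 0 < 1 - ε := by linarith
  have hd : ∀ x, 0 < bipDeg B x := by
    rintro (i | j)
    · have : (0 : ℝ) < m := Nat.cast_pos.2 i.pos
      exact (by positivity : 0 < (1 - ε) * s / m).trans_le (by simpa using (hrow i).1)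
    · have : (0 : ℝ) < n := Nat.cast_pos.2 j.pos
      exact (by positivity : 0 < (1 - ε) * s / n).trans_le (by simpa using (hcol j).1)
  calc sv B 2 ≤ (1 + ε) * s / √(m * n) * sv (bipNormalize B) 2 := hscale
    _ ≤ (1 + ε) * s / √(m * n) * (1 - bipConductance B ^ 2 / 2) := by
      gcongr
      exact sv_two_bipNormalize_le hB hm hd
    _ = (1 + ε) * (1 - bipConductance B ^ 2 / 2) * (s / √(m * n)) := by ring
    _ ≤ (1 - bipConductance B ^ 2 / 2 + 3 * ε) * (s / √(m * n)) := by
      gcongr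
      nlinarith [sq_nonneg (bipConductance B)]
    _ = (1 - bipConductance B ^ 2 / 2 + 3 * ε) * s / √(m * n) := by ring

/-- for an ε-nearly doubly balanced non-negative matrix `B` with `ε ≤ 1/2`,
`σ₂(B) ≤ (1 − φ(G_B)²/2 + 3ε) · s(B)/√(mn)`. -/
theorem stmt16 {m n : ℕ} (hm : 0 < m) (hn : 0 < n)
    (B : Matrix (Fin m) (Fin n) ℝ) (ε : ℝ) (hε0 : 0 ≤ ε) (hε : ε ≤ 1 / 2)
    (hB : ∀ i j, 0 ≤ B i j)
    (s : ℝ) (hs : s = ∑ i, ∑ j, B i j)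
    (hrow : ∀ i, (1 - ε) * s / m ≤ ∑ j, B i j ∧ ∑ j, B i j ≤ (1 + ε) * s / m)
    (hcol : ∀ j, (1 - ε) * s / n ≤ ∑ i, B i j ∧ ∑ i, B i j ≤ (1 + ε) * s / n) :
    sv B 2 ≤ (1 - bipConductance B ^ 2 / 2 + 3 * ε) * s / Real.sqrt (m * n) :=
  stmt16_general hm B ε hε0 hε hB s hs hrow hcol
end
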